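/- Let P be a distribution on [n] and let the domain be partitioned into a set H of singleton points and a set L of disjoint intervals, each interval in L having total P-mass less than ε/(2k). Let f' be the histogram that equals pᵢ exactly on each i ∈ H and equals the median of the nonzero masses within each interval of L. Then for any k-piece histogram f*, err_P(f') ≤ err_P(f*) + ε/2, where err_P(g) = ∑_{i ∈ supp(P)} |pᵢ - g(i)|. -/

import Mathlib

/-!
Split the error of `f'` and of `f*` over the intervals of `L` (on `H`, `f'` makes no error). On an
interval where `f*` is constant, `f'` does at least as well as `f*`, because the median of the
nonzero masses is the best constant approximation to them. On an interval crossed by a breakpoint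
of `f*`, the median still beats the constant `0`, so `f'` errs by at most the interval's mass,
less than `ε / (2k)`. Each crossed interval contains its own breakpoint and `f*` has fewer than
`k` breakpoints, so these intervals contribute less than `ε / 2` in total.
-/

/-- The median of a multiset of reals: the element at position `⌈card/2⌉`
(upper median) of the sorted list. -/
noncomputable def msMedian (s : Multiset ℝ) : ℝ :=
  (s.sort (· ≤ ·)).getD (Multiset.card s / 2) 0

/-- The support-aware L1 error of approximating the distribution `p` on `[n]`
by the function `g`. -/
noncomputable def errP (n : ℕ) (p g : ℕ → ℝ) : ℝ :=
  ∑ i ∈ (Finset.Icc 1 n).filter fun i => p i ≠ 0, |p i - g i|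

/-- `f` is a `k`-piece histogram on `[n]`: it is piecewise constant with at most
`k` contiguous pieces. -/
def IsKHistogram (n k : ℕ) (f : ℕ → ℝ) : Prop :=
  ((Finset.Icc 2 n).filter fun i => f i ≠ f (i - 1)).card + 1 ≤ k

open Finset

section Median

variable {ι : Type*} (s : Finset ι) (f : ι → ℝ) {m : ℝ}

theorem sum_abs_sub_le_of_le_of_card_le {c : ℝ} (hmc : m ≤ c)
    (hm : #s ≤ 2 * #{i ∈ s | f i ≤ m}) :
    ∑ i ∈ s, |f i - m| ≤ ∑ i ∈ s, |f i - c| := by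
  have hpt : ∀ i ∈ s, |f i - m| ≤ |f i - c| + if f i ≤ m then -(c - m) else c - m := by
    intro i _
    split_ifs with h
    · rw [abs_of_nonpos (by linarith), abs_of_nonpos (by linarith)]; linarith
    · have := abs_sub_le (f i) c m
      rw [abs_of_nonneg (sub_nonneg.2 hmc)] at this
      linarith [abs_sub_comm c m]
  have hcard := card_filter_add_card_filter_not (s := s) (fun i => f i ≤ m)
  calc ∑ i ∈ s, |f i - m|
      ≤ ∑ i ∈ s, (|f i - c| + if f i ≤ m then -(c - m) else c - m) := sum_le_sum hpt
    _ = ∑ i ∈ s, |f i - c| + (#{i ∈ s | ¬f i ≤ m} - #{i ∈ s | f i ≤ m} : ℝ) * (c - m) := by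
      rw [sum_add_distrib, sum_ite]; simp only [sum_const, nsmul_eq_mul]; ring
    _ ≤ ∑ i ∈ s, |f i - c| := by
      have : (#{i ∈ s | ¬f i ≤ m} : ℝ) ≤ #{i ∈ s | f i ≤ m} := by exact_mod_cast (by omega)
      nlinarith

theorem sum_abs_sub_le_of_card_le (hle : #s ≤ 2 * #{i ∈ s | f i ≤ m})
    (hge : #s ≤ 2 * #{i ∈ s | m ≤ f i}) (c : ℝ) :
    ∑ i ∈ s, |f i - m| ≤ ∑ i ∈ s, |f i - c| := by
  rcases le_total m c with hmc | hcm
  · exact sum_abs_sub_le_of_le_of_card_le s f hmc hle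
  · have := sum_abs_sub_le_of_le_of_card_le s (-f) (neg_le_neg hcm) (m := -m)
      (by simpa only [Pi.neg_apply, neg_le_neg_iff] using hge)
    simpa only [Pi.neg_apply, sub_neg_eq_add, neg_add_eq_sub, abs_sub_comm] using this

end Median

theorem List.SortedLE.succ_le_countP_le_getElem {α : Type*} [LinearOrder α] {l : List α}
    (hl : l.SortedLE) {i : ℕ} (hi : i < l.length) : i + 1 ≤ l.countP (· ≤ l[i]) := by
  refine le_trans ?_ (List.take_sublist (i + 1) l).countP_le
  rw [List.countP_eq_length.2, List.length_take]
  · omega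
  intro x hx
  obtain ⟨j, hj, rfl⟩ := List.mem_take_iff_getElem.1 hx
  simpa using hl.getElem_le_getElem_of_le (by omega : j ≤ i)

theorem List.SortedLE.length_sub_le_countP_getElem_le {α : Type*} [LinearOrder α] {l : List α}
    (hl : l.SortedLE) {i : ℕ} (hi : i < l.length) : l.length - i ≤ l.countP (l[i] ≤ ·) := by
  refine le_trans ?_ (List.drop_sublist i l).countP_le
  rw [List.countP_eq_length.2, List.length_drop]
  intro x hx
  obtain ⟨j, hj, rfl⟩ := List.mem_drop_iff_getElem.1 hx
  simpa using hl.getElem_le_getElem_of_le (by omega : i ≤ i + j)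

theorem card_le_two_mul_card_filter_le_msMedian (s : Multiset ℝ) :
    Multiset.card s ≤ 2 * Multiset.card (s.filter (· ≤ msMedian s)) ∧
      Multiset.card s ≤ 2 * Multiset.card (s.filter (msMedian s ≤ ·)) := by
  set l := s.sort (· ≤ ·)
  have hl : l.SortedLE := (Multiset.pairwise_sort s _).sortedLE
  have hlen : l.length = Multiset.card s := Multiset.length_sort _
  rcases Nat.eq_zero_or_pos (Multiset.card s) with h0 | hpos
  · simp [h0]
  have hi : l.length / 2 < l.length := by omega
  have hmed : msMedian s = l[l.length / 2] := by
    rw [msMedian, ← hlen]; exact List.getD_eq_getElem _ _ hi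
  have hs : (l : Multiset ℝ) = s := Multiset.sort_eq s _
  rw [hmed, ← hlen, ← hs, Multiset.filter_coe, Multiset.filter_coe,
    Multiset.coe_card, Multiset.coe_card, ← List.countP_eq_length_filter,
    ← List.countP_eq_length_filter]
  have := hl.succ_le_countP_le_getElem hi
  have := hl.length_sub_le_countP_getElem_le hi
  constructor <;> omega

theorem Finset.sum_abs_sub_msMedian_le {ι : Type*} (s : Finset ι) (f : ι → ℝ) (c : ℝ) :
    ∑ i ∈ s, |f i - msMedian (s.val.map f)| ≤ ∑ i ∈ s, |f i - c| := by
  obtain ⟨hle, hge⟩ := card_le_two_mul_card_filter_le_msMedian (s.val.map f)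
  simp only [Multiset.filter_map, Multiset.card_map] at hle hge
  exact sum_abs_sub_le_of_card_le s f hle hge c

theorem eq_of_forall_mem_Ioc_eq_sub_one {α : Type*} {f : ℕ → α} {a b : ℕ}
    (h : ∀ j ∈ Ioc a b, f j = f (j - 1)) : ∀ i ∈ Icc a b, f i = f a := by
  suffices ∀ i, a ≤ i → i ≤ b → f i = f a from
    fun i hi => this i (mem_Icc.1 hi).1 (mem_Icc.1 hi).2
  intro i hai
  induction i, hai using Nat.le_induction with
  | base => exact fun _ => rfl
  | succ i hai ih =>
    intro hib
    rw [h (i + 1) (mem_Ioc.2 ⟨by omega, hib⟩), Nat.add_sub_cancel, ih (by omega)]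

theorem sum_abs_sub_msMedian_le_add_ite {p : ℕ → ℝ} (hp : ∀ i, 0 ≤ p i) {a b : ℕ} {δ : ℝ}
    (hmass : ∑ i ∈ Icc a b, p i ≤ δ) (g : ℕ → ℝ) :
    ∑ i ∈ Icc a b with p i ≠ 0, |p i - msMedian ({i ∈ Icc a b | p i ≠ 0}.val.map p)| ≤
      ∑ i ∈ Icc a b with p i ≠ 0, |p i - g i| +
        if ∃ j ∈ Ioc a b, g j ≠ g (j - 1) then δ else 0 := by
  split_ifs with hcrossed
  · calc _ ≤ ∑ i ∈ Icc a b with p i ≠ 0, |p i - 0| := sum_abs_sub_msMedian_le _ p 0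
      _ ≤ ∑ i ∈ Icc a b, p i := by
        simp only [sub_zero, abs_of_nonneg (hp _)]
        exact sum_le_sum_of_subset_of_nonneg (filter_subset _ _) fun i _ _ => hp i
      _ ≤ _ := le_add_of_nonneg_of_le (sum_nonneg fun _ _ => abs_nonneg _) hmass
  · have hconst : ∀ j ∈ Ioc a b, g j = g (j - 1) :=
      fun j hj => by_contra fun hne => hcrossed ⟨j, hj, hne⟩
    calc _ ≤ ∑ i ∈ Icc a b with p i ≠ 0, |p i - g a| := sum_abs_sub_msMedian_le _ p _
      _ = _ := by
        rw [add_zero]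
        exact sum_congr rfl fun i hi => by
          rw [eq_of_forall_mem_Ioc_eq_sub_one hconst i (mem_filter.1 hi).1]

theorem card_filter_not_disjoint_le {ι α : Type*} [DecidableEq α] {L : Finset ι}
    {A : ι → Finset α} (hA : (L : Set ι).PairwiseDisjoint A) (T : Finset α) :
    #{I ∈ L | ¬Disjoint (A I) T} ≤ #T := by
  calc #{I ∈ L | ¬Disjoint (A I) T}
      ≤ #({I ∈ L | ¬Disjoint (A I) T}.biUnion fun I => A I ∩ T) :=
        card_le_card_biUnion
          (fun I hI J hJ hIJ => (hA (mem_filter.1 hI).1 (mem_filter.1 hJ).1 hIJ).mono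
            inter_subset_left inter_subset_left)
          fun I hI => not_disjoint_iff_nonempty_inter.1 (mem_filter.1 hI).2
    _ ≤ #T := card_le_card (biUnion_subset.2 fun _ _ => inter_subset_right)

theorem IsKHistogram.card_filter_exists_ne_lt {n k : ℕ} {f : ℕ → ℝ} (hf : IsKHistogram n k f)
    {L : Finset (ℕ × ℕ)} (hL : ∀ I ∈ L, 1 ≤ I.1 ∧ I.2 ≤ n)
    (hdisj : (L : Set (ℕ × ℕ)).PairwiseDisjoint fun I => Icc I.1 I.2) :
    #{I ∈ L | ∃ j ∈ Ioc I.1 I.2, f j ≠ f (j - 1)} < k := by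
  set T := {i ∈ Icc 2 n | f i ≠ f (i - 1)}
  have hcrossed : ∀ I ∈ L, (∃ j ∈ Ioc I.1 I.2, f j ≠ f (j - 1)) → ¬Disjoint (Ioc I.1 I.2) T := by
    rintro I hI ⟨j, hj, hne⟩
    obtain ⟨h1, h2⟩ := hL I hI
    have hjT : j ∈ T := mem_filter.2 ⟨by simp only [mem_Ioc, mem_Icc] at hj ⊢; omega, hne⟩
    exact not_disjoint_iff.2 ⟨j, hj, hjT⟩
  calc #{I ∈ L | ∃ j ∈ Ioc I.1 I.2, f j ≠ f (j - 1)}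
      ≤ #{I ∈ L | ¬Disjoint (Ioc I.1 I.2) T} := card_le_card (monotone_filter_right _ hcrossed)
    _ ≤ #T := card_filter_not_disjoint_le
        (hdisj.mono fun I => Ioc_subset_Icc_self) T
    _ < k := hf

theorem sum_sum_abs_sub_le_errP {n : ℕ} {p : ℕ → ℝ} {L : Finset (ℕ × ℕ)}
    (hdisj : (L : Set (ℕ × ℕ)).PairwiseDisjoint fun I => Icc I.1 I.2)
    (hL : ∀ I ∈ L, 1 ≤ I.1 ∧ I.2 ≤ n) (g : ℕ → ℝ) :
    ∑ I ∈ L, ∑ i ∈ Icc I.1 I.2 with p i ≠ 0, |p i - g i| ≤ errP n p g := by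
  rw [← sum_biUnion (hdisj.mono fun I => filter_subset _ _), errP]
  refine sum_le_sum_of_subset_of_nonneg (biUnion_subset.2 fun I hI i hi => ?_)
    fun i _ _ => abs_nonneg _
  obtain ⟨h1, h2⟩ := hL I hI
  simp only [mem_filter, mem_Icc] at hi ⊢
  exact ⟨⟨by omega, by omega⟩, hi.2⟩

theorem errP_le_sum_sum_abs_sub {n : ℕ} {p : ℕ → ℝ} {L : Finset (ℕ × ℕ)}
    (hdisj : (L : Set (ℕ × ℕ)).PairwiseDisjoint fun I => Icc I.1 I.2) {H : Finset ℕ}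
    (hcover : ∀ i ∈ Icc 1 n, i ∈ H ∨ ∃ I ∈ L, i ∈ Icc I.1 I.2) {g : ℕ → ℝ}
    (hg : ∀ i ∈ H, g i = p i) :
    errP n p g ≤ ∑ I ∈ L, ∑ i ∈ Icc I.1 I.2 with p i ≠ 0, |p i - g i| := by
  rw [← sum_biUnion (hdisj.mono fun I => filter_subset _ _), errP,
    ← sum_filter_of_ne (p := (· ∉ H)) fun i _ hne hiH => hne (by rw [hg i hiH, sub_self, abs_zero])]
  refine sum_le_sum_of_subset_of_nonneg (fun i hi => ?_) fun i _ _ => abs_nonneg _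
  simp only [mem_filter] at hi
  obtain ⟨I, hI, hiI⟩ := (hcover i hi.1.1).resolve_left hi.2
  exact mem_biUnion.2 ⟨I, hI, mem_filter.2 ⟨hiI, hi.1.2⟩⟩

theorem stmt8_general (n k : ℕ) (ε : ℝ) (hε : 0 < ε)
    (p : ℕ → ℝ) (hp : ∀ i, 0 ≤ p i)
    (H : Finset ℕ)
    (L : Finset (ℕ × ℕ))
    (hL : ∀ I ∈ L, 1 ≤ I.1 ∧ I.1 ≤ I.2 ∧ I.2 ≤ n)
    (hLdisj : ∀ I ∈ L, ∀ J ∈ L, I ≠ J → Disjoint (Finset.Icc I.1 I.2) (Finset.Icc J.1 J.2))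
    (hcover : ∀ i ∈ Finset.Icc 1 n, i ∈ H ∨ ∃ I ∈ L, i ∈ Finset.Icc I.1 I.2)
    (hlight : ∀ I ∈ L, ∑ i ∈ Finset.Icc I.1 I.2, p i < ε / (2 * k))
    (f' : ℕ → ℝ)
    (hf'H : ∀ i ∈ H, f' i = p i)
    (hf'L : ∀ I ∈ L, ∀ i ∈ Finset.Icc I.1 I.2,
      f' i = msMedian ((((Finset.Icc I.1 I.2).filter fun j => p j ≠ 0)).val.map p))
    (fstar : ℕ → ℝ) (hfstar : IsKHistogram n k fstar) :
    errP n p f' ≤ errP n p fstar + ε / 2 := by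
  have hdisj : (L : Set (ℕ × ℕ)).PairwiseDisjoint fun I => Icc I.1 I.2 :=
    fun I hI J hJ => hLdisj I hI J hJ
  have hL' : ∀ I ∈ L, 1 ≤ I.1 ∧ I.2 ≤ n := fun I hI => ⟨(hL I hI).1, (hL I hI).2.2⟩
  set crossed : ℕ × ℕ → Prop := fun I => ∃ j ∈ Ioc I.1 I.2, fstar j ≠ fstar (j - 1)
  have hcrossed : #{I ∈ L | crossed I} < k := hfstar.card_filter_exists_ne_lt hL' hdisj
  have hinterval : ∀ I ∈ L, ∑ i ∈ Icc I.1 I.2 with p i ≠ 0, |p i - f' i| ≤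
      ∑ i ∈ Icc I.1 I.2 with p i ≠ 0, |p i - fstar i| + if crossed I then ε / (2 * k) else 0 := by
    intro I hI
    rw [sum_congr rfl fun i hi => by rw [hf'L I hI i (mem_filter.1 hi).1]]
    exact sum_abs_sub_msMedian_le_add_ite hp (hlight I hI).le fstar
  calc errP n p f' ≤ ∑ I ∈ L, ∑ i ∈ Icc I.1 I.2 with p i ≠ 0, |p i - f' i| :=
        errP_le_sum_sum_abs_sub hdisj hcover hf'H
    _ ≤ ∑ I ∈ L, (∑ i ∈ Icc I.1 I.2 with p i ≠ 0, |p i - fstar i|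
          + if crossed I then ε / (2 * k) else 0) := sum_le_sum hinterval
    _ = ∑ I ∈ L, ∑ i ∈ Icc I.1 I.2 with p i ≠ 0, |p i - fstar i|
          + #{I ∈ L | crossed I} * (ε / (2 * k)) := by
        rw [sum_add_distrib, ← sum_filter, sum_const, nsmul_eq_mul]
    _ ≤ errP n p fstar + k * (ε / (2 * k)) :=
        add_le_add (sum_sum_abs_sub_le_errP hdisj hL' fstar)
          (mul_le_mul_of_nonneg_right (by exact_mod_cast hcrossed.le) (by positivity))
    _ = errP n p fstar + ε / 2 := by
        have : (k : ℝ) ≠ 0 := Nat.cast_ne_zero.2 (by omega)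
        field_simp

/-- Two-pass correctness core: if `[n]` is partitioned into singletons `H` and
disjoint intervals `L` each of P-mass less than `ε/(2k)`, and `f'` equals `pᵢ`
on `H` and the median of the nonzero masses on each interval of `L`, then
`err_P(f') ≤ err_P(f*) + ε/2` for every `k`-piece histogram `f*`. -/
theorem stmt8 (n k : ℕ) (hk : 0 < k) (ε : ℝ) (hε : 0 < ε)
    (p : ℕ → ℝ) (hp : ∀ i, 0 ≤ p i) (hsum : ∑ i ∈ Finset.Icc 1 n, p i = 1)
    (H : Finset ℕ) (hH : H ⊆ Finset.Icc 1 n)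
    (L : Finset (ℕ × ℕ))
    (hL : ∀ I ∈ L, 1 ≤ I.1 ∧ I.1 ≤ I.2 ∧ I.2 ≤ n)
    (hLdisj : ∀ I ∈ L, ∀ J ∈ L, I ≠ J → Disjoint (Finset.Icc I.1 I.2) (Finset.Icc J.1 J.2))
    (hHL : ∀ h ∈ H, ∀ I ∈ L, h ∉ Finset.Icc I.1 I.2)
    (hcover : ∀ i ∈ Finset.Icc 1 n, i ∈ H ∨ ∃ I ∈ L, i ∈ Finset.Icc I.1 I.2)
    (hlight : ∀ I ∈ L, ∑ i ∈ Finset.Icc I.1 I.2, p i < ε / (2 * k))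
    (f' : ℕ → ℝ)
    (hf'H : ∀ i ∈ H, f' i = p i)
    (hf'L : ∀ I ∈ L, ∀ i ∈ Finset.Icc I.1 I.2,
      f' i = msMedian ((((Finset.Icc I.1 I.2).filter fun j => p j ≠ 0)).val.map p))
    (fstar : ℕ → ℝ) (hfstar : IsKHistogram n k fstar) :
    errP n p f' ≤ errP n p fstar + ε / 2 :=
  stmt8_general n k ε hε p hp H L hL hLdisj hcover hlight f' hf'H hf'L fstar hfstar
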